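/- arXiv:2007.07583 — 4 statements merged into one kernel-verified Lean document; each statement's English description precedes it below -/
import Mathlib

section
/- Existence and uniqueness of the disease-free equilibrium: if A is symmetric and irreducible and ν_S > 0, then the point ẑ with Ŝ_j = 1/ℓ and Î_j = 0 for all j is an equilibrium of the system (★), and it is the unique equilibrium of (★) lying in Δ whose infectious components are all zero. -/
open Finset Filter Topology Set

/-- Susceptible component of the drift of the SIS patch model
(with the convention `x/0 = 0`, matching `S_j I_j/(S_j+I_j) = 0` when `S_j + I_j = 0`). -/
noncomputable def driftS (ℓ : ℕ) (lam gam : Fin ℓ → ℝ) (νS : ℝ)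
    (A : Matrix (Fin ℓ) (Fin ℓ) ℝ) (S I : Fin ℓ → ℝ) (j : Fin ℓ) : ℝ :=
  - lam j * (S j * I j / (S j + I j)) + gam j * I j
    + νS * ∑ k ∈ univ.erase j, (A k j * S k - A j k * S j)

/-- Infectious component of the drift of the SIS patch model. -/
noncomputable def driftI (ℓ : ℕ) (lam gam : Fin ℓ → ℝ) (νI : ℝ)
    (A : Matrix (Fin ℓ) (Fin ℓ) ℝ) (S I : Fin ℓ → ℝ) (j : Fin ℓ) : ℝ :=
  lam j * (S j * I j / (S j + I j)) - gam j * I j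
    + νI * ∑ k ∈ univ.erase j, (A k j * I k - A j k * I j)

/-- The connectivity matrix `A` is irreducible: any two distinct patches are linked by a
chain of patches with nonzero connectivity coefficients. -/
def IrreducibleMat (ℓ : ℕ) (A : Matrix (Fin ℓ) (Fin ℓ) ℝ) : Prop :=
  ∀ j k : Fin ℓ, j ≠ k → ∃ s : ℕ, 2 ≤ s ∧ ∃ c : ℕ → Fin ℓ,
    c 0 = j ∧ c (s - 1) = k ∧ ∀ i, i < s - 1 → A (c i) (c (i + 1)) ≠ 0

/-- Existence and uniqueness of the disease-free equilibrium: if `A` is symmetric and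
irreducible and `ν_S > 0`, then `Ŝ_j = 1/ℓ`, `Î_j = 0` is an equilibrium of (★), and it is
the unique equilibrium of (★) in Δ whose infectious components all vanish. -/
theorem disease_free_equilibrium_exists_unique
    (ℓ : ℕ) (hℓ : 1 ≤ ℓ)
    (lam gam : Fin ℓ → ℝ) (hlam : ∀ j, 0 < lam j) (hgam : ∀ j, 0 < gam j)
    (νS νI : ℝ) (hνS : 0 < νS) (hνI : 0 ≤ νI)
    (A : Matrix (Fin ℓ) (Fin ℓ) ℝ) (hA : ∀ j k, 0 ≤ A j k) (hAdiag : ∀ j, A j j = 0)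
    (hsym : A.IsSymm) (hirr : IrreducibleMat ℓ A) :
    ((∀ j, driftS ℓ lam gam νS A (fun _ => (ℓ : ℝ)⁻¹) (fun _ => 0) j = 0) ∧
     (∀ j, driftI ℓ lam gam νI A (fun _ => (ℓ : ℝ)⁻¹) (fun _ => 0) j = 0)) ∧
    (∀ S I : Fin ℓ → ℝ,
      (∀ j, 0 ≤ S j) → (∀ j, 0 ≤ I j) → (∑ j, (S j + I j)) = 1 →
      (∀ j, driftS ℓ lam gam νS A S I j = 0) →
      (∀ j, driftI ℓ lam gam νI A S I j = 0) →
      (∀ j, I j = 0) →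
      S = (fun _ => (ℓ : ℝ)⁻¹)) := by

  have hℓpos : (0:ℕ) < ℓ := hℓ
  constructor
  · constructor
    · intro j
      simp only [driftS]
      have h0 : ∑ k ∈ univ.erase j, (A k j * (ℓ:ℝ)⁻¹ - A j k * (ℓ:ℝ)⁻¹) = 0 := by
        apply Finset.sum_eq_zero
        intro k hk
        rw [hsym.apply j k]; ring
      rw [h0]; ring
    · intro j
      simp only [driftI]
      have h0 : ∑ k ∈ univ.erase j, (A k j * (0:ℝ) - A j k * 0) = 0 := by
        apply Finset.sum_eq_zero; intro k _; ring
      rw [h0]; ring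
  · intro S I hS hI hsum hdS hdI hI0
    -- equilibrium condition: for each j, ∑_k A k j * (S k - S j) = 0
    have heq : ∀ j, ∑ k, A k j * (S k - S j) = 0 := by
      intro j
      have h := hdS j
      simp only [driftS, hI0 j, mul_zero, zero_div, add_zero] at h
      have h1 : ∑ k ∈ univ.erase j, (A k j * S k - A j k * S j) = 0 := by
        rcases mul_eq_zero.1 (by linarith : νS * ∑ k ∈ univ.erase j, (A k j * S k - A j k * S j) = 0) with h' | h'
        · exact absurd h' (ne_of_gt hνS)
        · exact h'
      have h2 : ∑ k ∈ univ.erase j, A k j * (S k - S j)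
          = ∑ k ∈ univ.erase j, (A k j * S k - A j k * S j) := by
        apply Finset.sum_congr rfl
        intro k _
        rw [hsym.apply j k]; ring
      rw [← Finset.sum_erase_add _ _ (Finset.mem_univ j), h2, h1]
      simp
    -- minimum of S
    obtain ⟨j0, _, hj0⟩ := Finset.exists_min_image (univ : Finset (Fin ℓ))
      S ⟨⟨0, hℓ⟩, Finset.mem_univ _⟩
    have hmin : ∀ k, S j0 ≤ S k := fun k => hj0 k (Finset.mem_univ k)
    -- neighbors of a min point are min points
    have hstep : ∀ j, S j = S j0 → ∀ k, A j k ≠ 0 → S k = S j0 := by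
      intro j hj k hjk
      have hnn : ∀ i ∈ (univ : Finset (Fin ℓ)), 0 ≤ A i j * (S i - S j) := by
        intro i _
        apply mul_nonneg (hA i j)
        rw [hj]; linarith [hmin i]
      have hall := (Finset.sum_eq_zero_iff_of_nonneg hnn).1 (heq j) k (Finset.mem_univ k)
      have hAkj : A k j ≠ 0 := by rw [hsym.apply j k]; exact hjk
      have := (mul_eq_zero.1 hall).resolve_left hAkj
      rw [hj] at this; linarith
    -- S is constant equal to S j0
    have hconst : ∀ k, S k = S j0 := by
      intro k
      by_cases hk : k = j0
      · rw [hk]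
      · obtain ⟨s, hs2, c, hc0, hcs, hcA⟩ := hirr j0 k (Ne.symm hk)
        have key : ∀ i, i ≤ s - 1 → S (c i) = S j0 := by
          intro i
          induction i with
          | zero => intro _; rw [hc0]
          | succ n ih =>
            intro hn
            have hn' : n < s - 1 := lt_of_lt_of_le (Nat.lt_succ_self n) hn
            exact hstep (c n) (ih (le_of_lt hn')) (c (n+1)) (hcA n hn')
        rw [← hcs]; exact key (s - 1) le_rfl
    -- sum is 1, so S j0 = 1/ℓ
    have hsum' : ∑ j, S j = 1 := by
      have : ∑ j, I j = 0 := Finset.sum_eq_zero (fun j _ => hI0 j)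
      rw [Finset.sum_add_distrib, this, add_zero] at hsum
      exact hsum
    have hsumc : (ℓ : ℝ) * S j0 = 1 := by
      rw [← hsum']
      rw [Finset.sum_congr rfl (fun k _ => hconst k)]
      simp [mul_comm]
    funext k
    rw [hconst k]
    field_simp at hsumc ⊢
    linarith
end

section
/- Global asymptotic stability of the stationary population distribution: if A is irreducible and ν > 0, then for every x ∈ ℝ^ℓ with x_j ≥ 0 for all j and Σ_j x_j = 1, the solution N(t) = exp(t ν D̃) x of the linear system dN_j/dt = ν Σ_{k≠j} (a_{kj} N_k − a_{jk} N_j) converges as t → ∞ to the unique vector N* with N*_j > 0 for all j, Σ_j N*_j = 1 and D̃ N* = 0, where D̃ is the matrix with D̃_{jk} = a_{kj} for k ≠ j and D̃_{jj} = −Σ_{k≠j} a_{jk}. -/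
open Finset Filter Topology

/-!
`ν D̃` has nonnegative off-diagonal entries and zero column sums, so the flow `exp (t ν D̃)` is a
semigroup of column-stochastic matrices fixing `N*`. Irreducibility makes every entry of
`E = exp (ν D̃)` positive, say `≥ ε`, and a column-stochastic matrix with entries `≥ ε` contracts
the `ℓ¹`-norm of zero-sum vectors by the factor `1 - ℓ ε < 1`. Hence
`‖exp (t ν D̃) x - N*‖₁ ≤ (1 - ℓ ε) ^ ⌊t⌋ ‖x - N*‖₁ → 0`.
-/

open NormedSpace

lemma tendsto_of_sum_abs_sub_le {ι α : Type*} [Fintype ι] {l : Filter α} {f : α → ι → ℝ}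
    {v : ι → ℝ} {g : α → ℝ} (hfg : ∀ᶠ a in l, ∑ i, |f a i - v i| ≤ g a)
    (hg : Tendsto g l (𝓝 0)) : Tendsto f l (𝓝 v) := by
  refine tendsto_pi_nhds.2 fun i => tendsto_iff_norm_sub_tendsto_zero.2 ?_
  refine squeeze_zero' (.of_forall fun _ => norm_nonneg _) ?_ hg
  filter_upwards [hfg] with a ha
  exact (single_le_sum (f := fun i => |f a i - v i|) (fun _ _ => abs_nonneg _) (mem_univ i)).trans ha

namespace Matrix

variable {n : Type*}

def IsMetzler (M : Matrix n n ℝ) : Prop :=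
  ∀ i j, i ≠ j → 0 ≤ M i j

lemma IsMetzler.smul {M : Matrix n n ℝ} (hM : M.IsMetzler) {t : ℝ} (ht : 0 ≤ t) :
    (t • M).IsMetzler :=
  fun i j hij => mul_nonneg ht (hM i j hij)

variable [Fintype n]

lemma sum_abs_mulVec_le_mul {P : Matrix n n ℝ} {C : ℝ} (h : ∀ k, ∑ j, |P j k| ≤ C)
    (y : n → ℝ) : ∑ j, |(P *ᵥ y) j| ≤ C * ∑ k, |y k| :=
  calc ∑ j, |(P *ᵥ y) j| ≤ ∑ j, ∑ k, |P j k| * |y k| :=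
        sum_le_sum fun j _ => (abs_sum_le_sum_abs _ _).trans_eq (by simp [abs_mul])
    _ = ∑ k, (∑ j, |P j k|) * |y k| := by rw [sum_comm]; simp [sum_mul]
    _ ≤ ∑ k, C * |y k| := sum_le_sum fun k _ => mul_le_mul_of_nonneg_right (h k) (abs_nonneg _)
    _ = C * ∑ k, |y k| := (mul_sum ..).symm

variable [DecidableEq n]

lemma prod_le_pow_apply {M : Matrix n n ℝ} (hM : ∀ i j, 0 ≤ M i j) (k : ℕ) (c : ℕ → n) :
    ∏ i ∈ range k, M (c i) (c (i + 1)) ≤ (M ^ k) (c 0) (c k) := by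
  induction k generalizing c with
  | zero => simp
  | succ k ih =>
    rw [prod_range_succ', mul_comm, pow_succ', mul_apply]
    calc M (c 0) (c 1) * ∏ i ∈ range k, M (c (i + 1)) (c (i + 1 + 1))
        ≤ M (c 0) (c 1) * (M ^ k) (c 1) (c (k + 1)) :=
          mul_le_mul_of_nonneg_left (ih fun i => c (i + 1)) (hM _ _)
      _ ≤ ∑ l, M (c 0) l * (M ^ k) l (c (k + 1)) :=
          single_le_sum (f := fun l => M (c 0) l * (M ^ k) l (c (k + 1)))
            (fun l _ => mul_nonneg (hM _ _) (pow_apply_nonneg hM k _ _)) (mem_univ _)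

lemma hasSum_exp (M : Matrix n n ℝ) :
    HasSum (fun k : ℕ => (k.factorial : ℝ)⁻¹ • M ^ k) (exp M) :=
  open scoped Norms.Operator in exp_series_hasSum_exp' M

lemma hasSum_exp_apply (M : Matrix n n ℝ) (i j : n) :
    HasSum (fun k : ℕ => (k.factorial : ℝ)⁻¹ * (M ^ k) i j) (exp M i j) :=
  Pi.hasSum.mp (Pi.hasSum.mp (hasSum_exp M) i) j

lemma exp_apply_nonneg_of_nonneg {M : Matrix n n ℝ} (hM : ∀ i j, 0 ≤ M i j) (i j : n) :
    0 ≤ exp M i j :=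
  (hasSum_exp_apply M i j).nonneg fun k => mul_nonneg (by positivity) (pow_apply_nonneg hM k i j)

lemma exp_apply_pos_of_pow_apply_pos {M : Matrix n n ℝ} (hM : ∀ i j, 0 ≤ M i j) {i j : n}
    {k : ℕ} (hk : 0 < (M ^ k) i j) : 0 < exp M i j :=
  (mul_pos (by positivity) hk).trans_le <| le_hasSum (hasSum_exp_apply M i j) k
    fun m _ => mul_nonneg (by positivity) (pow_apply_nonneg hM m i j)

lemma exp_eq_exp_neg_smul_exp_add_smul_one (M : Matrix n n ℝ) (r : ℝ) :
    exp M = Real.exp (-r) • exp (M + r • 1) := by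
  have hcomm : Commute (M + r • 1) ((-r) • 1) := (Commute.one_right _).smul_right _
  have hscalar : exp ((-r) • 1 : Matrix n n ℝ) = Real.exp (-r) • 1 := by
    rw [← Algebra.algebraMap_eq_smul_one, ← Algebra.algebraMap_eq_smul_one, Real.exp_eq_exp_ℝ]
    open scoped Norms.Operator in exact (algebraMap_exp_comm (-r)).symm
  calc exp M = exp ((M + r • 1) + (-r) • 1) := by rw [neg_smul, add_neg_cancel_right]
    _ = Real.exp (-r) • exp (M + r • 1) := by
      rw [exp_add_of_commute _ _ hcomm, hscalar, mul_smul_comm, mul_one]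

lemma IsMetzler.exists_add_smul_one_nonneg {M : Matrix n n ℝ} (hM : M.IsMetzler) :
    ∃ r : ℝ, (∀ i j, 0 ≤ (M + r • 1) i j) ∧ ∀ i, 0 < (M + r • 1) i i := by
  have hdiag : ∀ i, 0 < M i i + (1 + ∑ l, |M l l|) := fun i => by
    have := single_le_sum (f := fun l => |M l l|) (fun l _ => abs_nonneg _) (mem_univ i)
    linarith [neg_abs_le (M i i)]
  refine ⟨1 + ∑ l, |M l l|, fun i j => ?_, fun i => by simpa using hdiag i⟩
  rcases eq_or_ne i j with rfl | hij
  · simpa using (hdiag i).le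
  · simpa [one_apply_ne hij] using hM i j hij

lemma IsMetzler.exp_apply_nonneg {M : Matrix n n ℝ} (hM : M.IsMetzler) (i j : n) :
    0 ≤ exp M i j := by
  obtain ⟨r, hr, -⟩ := hM.exists_add_smul_one_nonneg
  rw [exp_eq_exp_neg_smul_exp_add_smul_one M r]
  exact mul_nonneg (Real.exp_pos _).le (exp_apply_nonneg_of_nonneg hr i j)

lemma IsMetzler.exp_apply_pos_of_chain {M : Matrix n n ℝ} (hM : M.IsMetzler) {c : ℕ → n}
    {s : ℕ} (hc : ∀ i < s, c i ≠ c (i + 1) → 0 < M (c i) (c (i + 1))) :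
    0 < exp M (c 0) (c s) := by
  obtain ⟨r, hr, hr_diag⟩ := hM.exists_add_smul_one_nonneg
  have hstep : ∀ i ∈ range s, 0 < (M + r • 1) (c i) (c (i + 1)) := fun i hi => by
    rcases eq_or_ne (c i) (c (i + 1)) with h | h
    · rw [← h]; exact hr_diag _
    · simpa [one_apply_ne h] using hc i (mem_range.mp hi) h
  rw [exp_eq_exp_neg_smul_exp_add_smul_one M r]
  exact mul_pos (Real.exp_pos _) <| exp_apply_pos_of_pow_apply_pos hr <|
    (prod_pos hstep).trans_le (prod_le_pow_apply hr s c)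

lemma IsMetzler.exp_apply_pos_of_irreducibleMat {ℓ : ℕ} {M A : Matrix (Fin ℓ) (Fin ℓ) ℝ}
    (hM : M.IsMetzler) (hA : IrreducibleMat ℓ A) (hMA : ∀ j k, j ≠ k → A j k ≠ 0 → 0 < M j k)
    (j k : Fin ℓ) : 0 < exp M j k := by
  obtain rfl | hjk := eq_or_ne j k
  · exact hM.exp_apply_pos_of_chain (c := fun _ => j) (s := 0) (by simp)
  obtain ⟨s, -, c, rfl, rfl, hc⟩ := hA j k hjk
  exact hM.exp_apply_pos_of_chain fun i hi hne => hMA _ _ hne (hc i hi)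

lemma exp_mulVec_of_mulVec_eq_zero {M : Matrix n n ℝ} {v : n → ℝ} (h : M *ᵥ v = 0) :
    exp M *ᵥ v = v := by
  have hterm : ∀ k ≠ 0, ((k.factorial : ℝ)⁻¹ • M ^ k) *ᵥ v = 0 := fun k hk => by
    rw [← Nat.succ_pred_eq_of_ne_zero hk, pow_succ, smul_mulVec, ← mulVec_mulVec, h, mulVec_zero,
      smul_zero]
  have hsum := (hasSum_exp M).map (AddMonoidHom.mk' (· *ᵥ v) fun _ _ => add_mulVec _ _ _)
    (continuous_id.matrix_mulVec continuous_const)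
  simpa using hsum.unique (hasSum_single 0 hterm)

lemma vecMul_exp_of_vecMul_eq_zero {M : Matrix n n ℝ} {v : n → ℝ} (h : v ᵥ* M = 0) :
    v ᵥ* exp M = v := by
  rw [← mulVec_transpose, ← exp_transpose]
  exact exp_mulVec_of_mulVec_eq_zero (by rwa [mulVec_transpose])

lemma IsMetzler.exp_mem_colStochastic {M : Matrix n n ℝ} (hM : M.IsMetzler) (h : 1 ᵥ* M = 0) :
    exp M ∈ colStochastic ℝ n :=
  ⟨hM.exp_apply_nonneg, vecMul_exp_of_vecMul_eq_zero h⟩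

lemma exp_smul_eq_exp_smul_mul_pow_floor (M : Matrix n n ℝ) (t : ℝ) :
    exp (t • M) = exp ((t - ⌊t⌋₊) • M) * exp M ^ ⌊t⌋₊ := by
  have hcomm : Commute ((t - ⌊t⌋₊) • M) ((⌊t⌋₊ : ℝ) • M) :=
    ((Commute.refl M).smul_left _).smul_right _
  rw [← exp_nsmul, ← Nat.cast_smul_eq_nsmul ℝ, ← exp_add_of_commute _ _ hcomm, ← add_smul,
    sub_add_cancel]

lemma sum_abs_mulVec_le_of_mem_colStochastic {P : Matrix n n ℝ} (hP : P ∈ colStochastic ℝ n)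
    (y : n → ℝ) : ∑ j, |(P *ᵥ y) j| ≤ ∑ k, |y k| := by
  simpa using sum_abs_mulVec_le_mul (C := 1)
    (fun k => by simp [abs_of_nonneg (hP.1 _ _), sum_col_of_mem_colStochastic hP k]) y

lemma card_mul_le_one_of_le_apply [Nonempty n] {P : Matrix n n ℝ} (hP : P ∈ colStochastic ℝ n)
    {ε : ℝ} (hε : ∀ i j, ε ≤ P i j) : Fintype.card n * ε ≤ 1 := by
  obtain ⟨k⟩ := ‹Nonempty n›
  calc Fintype.card n * ε = ∑ _j : n, ε := by simp
    _ ≤ ∑ j, P j k := sum_le_sum fun j _ => hε j k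
    _ = 1 := sum_col_of_mem_colStochastic hP k

lemma sum_abs_mulVec_le_of_le_apply {P : Matrix n n ℝ} (hP : P ∈ colStochastic ℝ n) {ε : ℝ}
    (hε : ∀ i j, ε ≤ P i j) {y : n → ℝ} (hy : ∑ k, y k = 0) :
    ∑ j, |(P *ᵥ y) j| ≤ (1 - Fintype.card n * ε) * ∑ k, |y k| := by
  set Q : Matrix n n ℝ := of fun j k => P j k - ε
  -- Since `∑ y = 0`, shifting every entry by `ε` leaves `P *ᵥ y` unchanged; the shifted matrix
  -- is nonnegative with column sums `1 - card n * ε`.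
  have hQ : Q *ᵥ y = P *ᵥ y := by
    ext j
    simp [Q, mulVec, dotProduct, sub_mul, sum_sub_distrib, ← mul_sum, hy]
  rw [← hQ]
  refine sum_abs_mulVec_le_mul (fun k => le_of_eq ?_) y
  simp [Q, abs_of_nonneg (sub_nonneg.2 (hε _ k)), sum_sub_distrib,
    sum_col_of_mem_colStochastic hP k]

lemma sum_abs_pow_mulVec_le [Nonempty n] {P : Matrix n n ℝ} (hP : P ∈ colStochastic ℝ n)
    {ε : ℝ} (hε : ∀ i j, ε ≤ P i j) {y : n → ℝ} (hy : ∑ k, y k = 0) (m : ℕ) :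
    ∑ j, |((P ^ m) *ᵥ y) j| ≤ (1 - Fintype.card n * ε) ^ m * ∑ k, |y k| := by
  induction m with
  | zero => simp
  | succ m ih =>
    have hsum : ∑ k, ((P ^ m) *ᵥ y) k = 0 := by
      rw [sum_mulVec_of_mem_colStochastic (pow_mem hP m), hy]
    rw [pow_succ', ← mulVec_mulVec, pow_succ', mul_assoc]
    exact (sum_abs_mulVec_le_of_le_apply hP hε hsum).trans <| mul_le_mul_of_nonneg_left ih <|
      sub_nonneg.2 (card_mul_le_one_of_le_apply hP hε)

theorem IsMetzler.tendsto_exp_smul_mulVec [Nonempty n] {M : Matrix n n ℝ} (hM : M.IsMetzler)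
    (hcol : 1 ᵥ* M = 0) (hpos : ∀ i j, 0 < exp M i j) {v x : n → ℝ} (hv : M *ᵥ v = 0)
    (hx : ∑ i, x i = ∑ i, v i) : Tendsto (fun t : ℝ => exp (t • M) *ᵥ x) atTop (𝓝 v) := by
  obtain ⟨⟨i₀, j₀⟩, hmin⟩ := Finite.exists_min fun p : n × n => exp M p.1 p.2
  have hE := hM.exp_mem_colStochastic hcol
  set q := 1 - Fintype.card n * exp M i₀ j₀
  have hq0 : 0 ≤ q := sub_nonneg.2 (card_mul_le_one_of_le_apply hE fun i j => hmin (i, j))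
  have hq1 : q < 1 := sub_lt_self _ (mul_pos (by simp [Fintype.card_pos]) (hpos i₀ j₀))
  have hy : ∑ i, (x - v) i = 0 := by simp [sum_sub_distrib, hx]
  refine tendsto_of_sum_abs_sub_le (g := fun t => q ^ ⌊t⌋₊ * ∑ i, |(x - v) i|) ?_ <| by
    simpa using ((tendsto_pow_atTop_nhds_zero_of_lt_one hq0 hq1).comp
      tendsto_nat_floor_atTop).mul_const (∑ i, |(x - v) i|)
  filter_upwards [eventually_ge_atTop 0] with t ht
  have hfract : exp ((t - ⌊t⌋₊) • M) ∈ colStochastic ℝ n :=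
    (hM.smul (sub_nonneg.2 (Nat.floor_le ht))).exp_mem_colStochastic
      (by rw [vecMul_smul, hcol, smul_zero])
  have hfix : exp (t • M) *ᵥ v = v :=
    exp_mulVec_of_mulVec_eq_zero (by rw [smul_mulVec, hv, smul_zero])
  calc ∑ i, |(exp (t • M) *ᵥ x) i - v i|
      = ∑ i, |(exp ((t - ⌊t⌋₊) • M) *ᵥ (exp M ^ ⌊t⌋₊ *ᵥ (x - v))) i| := by
        rw [mulVec_mulVec, ← exp_smul_eq_exp_smul_mul_pow_floor, mulVec_sub, hfix]; rfl
    _ ≤ ∑ i, |(exp M ^ ⌊t⌋₊ *ᵥ (x - v)) i| := sum_abs_mulVec_le_of_mem_colStochastic hfract _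
    _ ≤ q ^ ⌊t⌋₊ * ∑ i, |(x - v) i| := sum_abs_pow_mulVec_le hE (fun i j => hmin (i, j)) hy _

end Matrix

open Matrix

theorem stationary_distribution_globally_asymptotically_stable_general
    (ℓ : ℕ) (hℓ : 1 ≤ ℓ)
    (A : Matrix (Fin ℓ) (Fin ℓ) ℝ) (hA : ∀ j k, 0 ≤ A j k)
    (hirr : IrreducibleMat ℓ A)
    (ν : ℝ) (hν : 0 < ν)
    (Dt : Matrix (Fin ℓ) (Fin ℓ) ℝ)
    (hDt : ∀ j k, Dt j k = if j = k then -∑ i ∈ univ.erase j, A j i else A k j)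
    (Nstar : Fin ℓ → ℝ) (hsum : (∑ j, Nstar j) = 1)
    (hstat : Dt.mulVec Nstar = 0)
    (x : Fin ℓ → ℝ) (hxsum : (∑ j, x j) = 1) :
    Tendsto (fun t : ℝ => (NormedSpace.exp (t • (ν • Dt))).mulVec x)
      atTop (nhds Nstar) := by
  have : Nonempty (Fin ℓ) := ⟨⟨0, hℓ⟩⟩
  set B := ν • Dt
  have hB_offDiag : ∀ j k, j ≠ k → B j k = ν * A k j := fun j k hjk => by
    simp [B, hDt, hjk]
  have hB : B.IsMetzler := fun j k hjk => by
    rw [hB_offDiag j k hjk]; exact mul_nonneg hν.le (hA k j)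
  have hBt : Bᵀ.IsMetzler := fun j k hjk => hB k j hjk.symm
  have hDt_col : ∀ k, ∑ j, Dt j k = 0 := fun k => by
    rw [← add_sum_erase _ _ (mem_univ k), hDt k k, if_pos rfl, neg_add_eq_zero]
    exact sum_congr rfl fun j hj => by rw [hDt, if_neg (ne_of_mem_erase hj)]
  have hB_col : 1 ᵥ* B = 0 := by
    ext k
    simp [B, vecMul, dotProduct, ← mul_sum, hDt_col]
  have hB_pos : ∀ j k, 0 < exp B j k := fun j k => by
    rw [← transpose_apply (exp B), ← exp_transpose]
    refine hBt.exp_apply_pos_of_irreducibleMat hirr (fun j k hjk hA_ne => ?_) k j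
    rw [transpose_apply, hB_offDiag k j hjk.symm]
    exact mul_pos hν ((hA j k).lt_of_ne' hA_ne)
  exact hB.tendsto_exp_smul_mulVec hB_col hB_pos (by rw [smul_mulVec, hstat, smul_zero])
    (hxsum.trans hsum.symm)

/-- Global asymptotic stability of the stationary population distribution: if `A` is
irreducible and `ν > 0`, then for every probability vector `x`, the solution
`N(t) = exp(t ν D̃) x` of `dN/dt = ν D̃ N` converges, as `t → ∞`, to the unique positive
probability vector `N*` with `D̃ N* = 0`; here `D̃_{jk} = a_{kj}` for `k ≠ j` and
`D̃_{jj} = −Σ_{k≠j} a_{jk}`. -/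
theorem stationary_distribution_globally_asymptotically_stable
    (ℓ : ℕ) (hℓ : 1 ≤ ℓ)
    (A : Matrix (Fin ℓ) (Fin ℓ) ℝ) (hA : ∀ j k, 0 ≤ A j k) (hAdiag : ∀ j, A j j = 0)
    (hirr : IrreducibleMat ℓ A)
    (ν : ℝ) (hν : 0 < ν)
    (Dt : Matrix (Fin ℓ) (Fin ℓ) ℝ)
    (hDt : ∀ j k, Dt j k = if j = k then -∑ i ∈ univ.erase j, A j i else A k j)
    (Nstar : Fin ℓ → ℝ) (hpos : ∀ j, 0 < Nstar j) (hsum : (∑ j, Nstar j) = 1)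
    (hstat : Dt.mulVec Nstar = 0)
    (x : Fin ℓ → ℝ) (hx : ∀ j, 0 ≤ x j) (hxsum : (∑ j, x j) = 1) :
    Tendsto (fun t : ℝ => (NormedSpace.exp (t • (ν • Dt))).mulVec x)
      atTop (nhds Nstar) :=
  stationary_distribution_globally_asymptotically_stable_general ℓ hℓ A hA hirr ν hν Dt hDt Nstar
    hsum hstat x hxsum
end

section
/- Local asymptotic stability of the endemic equilibrium via the Jacobian: assume A is symmetric and irreducible, ν > 0, and let I* ∈ ℝ^ℓ with 0 < I*_j < 1/ℓ for all j satisfy (νD − 𝔸 + B) I* = ℓ·diag(I*) B I*. Then the Jacobian J = νD − 𝔸 + B − ℓ·diag(I*)B − ℓ·diag(B I*) of the reduced vector field at I* satisfies J I* = −ℓ·diag(B I*) I*, whose components are all strictly negative, and consequently the stability modulus satisfies α(J) < 0. -/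
/-!
Substituting the equilibrium equation into `J I*` leaves `J I* = −ℓ·diag(B I*) I*`, which is
negative since `I* > 0`. Off the diagonal `J` agrees with `νA ≥ 0`, so `J` is a Metzler matrix
with a positive vector `I*` on which it is negative. Conjugating by `diag(I*)` keeps the
off-diagonal entries nonnegative and makes every row sum negative, and then each Gershgorin disc
lies in the open left half-plane.
-/

open Finset Filter Topology

namespace Matrix

variable {ι : Type*} [Fintype ι] [DecidableEq ι]

theorem spectrum_diagonal_inv_mul_mul_diagonal {K : Type*} [Field K] (M : Matrix ι ι K)
    {v : ι → K} (hv : ∀ i, v i ≠ 0) :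
    spectrum K (diagonal v⁻¹ * M * diagonal v) = spectrum K M := by
  let u : (Matrix ι ι K)ˣ :=
    ⟨diagonal v, diagonal v⁻¹, by simp [diagonal_mul_diagonal, hv],
      by simp [diagonal_mul_diagonal, hv]⟩
  exact spectrum.units_conjugate' (u := u)

theorem re_lt_zero_of_mem_spectrum_of_offDiag_nonneg_of_sum_row_neg {J : Matrix ι ι ℝ}
    (hoff : ∀ j k, j ≠ k → 0 ≤ J j k) (hrow : ∀ k, ∑ j, J k j < 0) {δ : ℂ}
    (hδ : δ ∈ spectrum ℂ (J.map (Complex.ofReal ·))) : δ.re < 0 := by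
  rw [← spectrum_toLin', ← Module.End.hasEigenvalue_iff_mem_spectrum] at hδ
  obtain ⟨k, hk⟩ := eigenvalue_mem_ball hδ
  rw [mem_closedBall_iff_norm] at hk
  have hradius : ∑ j ∈ univ.erase k, ‖(J k j : ℂ)‖ = ∑ j ∈ univ.erase k, J k j :=
    sum_congr rfl fun j hj => by
      rw [Complex.norm_real, Real.norm_of_nonneg (hoff k j (ne_of_mem_erase hj).symm)]
  calc δ.re = J k k + (δ - J k k).re := by simp
    _ ≤ J k k + ∑ j ∈ univ.erase k, J k j := by
      grw [Complex.re_le_norm, ← hradius]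
      simpa using hk
    _ = ∑ j, J k j := add_sum_erase _ _ (mem_univ k)
    _ < 0 := hrow k

theorem re_lt_zero_of_mem_spectrum_of_offDiag_nonneg_of_mulVec_neg {J : Matrix ι ι ℝ}
    (hoff : ∀ j k, j ≠ k → 0 ≤ J j k) {x : ι → ℝ} (hx : ∀ j, 0 < x j)
    (hJx : ∀ j, (J *ᵥ x) j < 0) {δ : ℂ}
    (hδ : δ ∈ spectrum ℂ (J.map (Complex.ofReal ·))) : δ.re < 0 := by
  set S := diagonal x⁻¹ * J * diagonal x
  have hS : ∀ j k, S j k = (x j)⁻¹ * J j k * x k := fun j k => by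
    simp [S, mul_diagonal, diagonal_mul]
  have hmap : S.map (Complex.ofReal ·) = diagonal (fun j => (x j : ℂ))⁻¹
      * J.map (Complex.ofReal ·) * diagonal (fun j => (x j : ℂ)) := by
    ext j k; simp [hS, mul_diagonal, diagonal_mul]
  refine re_lt_zero_of_mem_spectrum_of_offDiag_nonneg_of_sum_row_neg (J := S)
    (fun j k hjk => ?_) (fun k => ?_) ?_
  · rw [hS]; have := hx j; have := hx k; have := hoff j k hjk; positivity
  · simp_rw [hS, mul_assoc, ← mul_sum]
    exact mul_neg_of_pos_of_neg (inv_pos.2 (hx k)) (hJx k)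
  · rwa [hmap, spectrum_diagonal_inv_mul_mul_diagonal _ fun j => by simpa using (hx j).ne']

end Matrix

theorem endemic_equilibrium_locally_asymptotically_stable_general
    (ℓ : ℕ)
    (lam gam : Fin ℓ → ℝ) (hlam : ∀ j, 0 < lam j)
    (ν : ℝ) (hν : 0 < ν)
    (A : Matrix (Fin ℓ) (Fin ℓ) ℝ) (hA : ∀ j k, 0 ≤ A j k)
    (D : Matrix (Fin ℓ) (Fin ℓ) ℝ)
    (hD : ∀ j k, D j k = if j = k then -∑ i ∈ univ.erase j, A j i else A j k)
    (Istar : Fin ℓ → ℝ) (hIpos : ∀ j, 0 < Istar j ∧ Istar j < (ℓ : ℝ)⁻¹)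
    (hEq : (ν • D - Matrix.diagonal gam + Matrix.diagonal lam).mulVec Istar
      = (ℓ : ℝ) • (Matrix.diagonal Istar * Matrix.diagonal lam).mulVec Istar)
    (J : Matrix (Fin ℓ) (Fin ℓ) ℝ)
    (hJ : J = ν • D - Matrix.diagonal gam + Matrix.diagonal lam
      - (ℓ : ℝ) • (Matrix.diagonal Istar * Matrix.diagonal lam)
      - (ℓ : ℝ) • Matrix.diagonal ((Matrix.diagonal lam).mulVec Istar)) :
    J.mulVec Istar
      = -((ℓ : ℝ) • (Matrix.diagonal ((Matrix.diagonal lam).mulVec Istar)).mulVec Istar) ∧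
    (∀ j, (J.mulVec Istar) j < 0) ∧
    (∀ δ ∈ spectrum ℂ (J.map (Complex.ofReal ·)), δ.re < 0) := by
  have hJI : J.mulVec Istar
      = -((ℓ : ℝ) • (Matrix.diagonal ((Matrix.diagonal lam).mulVec Istar)).mulVec Istar) := by
    rw [hJ, Matrix.sub_mulVec, Matrix.sub_mulVec, hEq, Matrix.smul_mulVec, Matrix.smul_mulVec]
    abel
  have hJI_neg : ∀ j, (J.mulVec Istar) j < 0 := fun j => by
    have := (hIpos j).1; have := hlam j; have : (0 : ℝ) < ℓ := Nat.cast_pos.2 j.pos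
    simp only [hJI, Pi.neg_apply, Pi.smul_apply, Matrix.mulVec_diagonal, smul_eq_mul,
      neg_lt_zero]
    positivity
  have hJ_offDiag : ∀ j k, j ≠ k → 0 ≤ J j k := fun j k hjk => by
    have hJjk : J j k = ν * A j k := by simp [hJ, hD, hjk]
    exact hJjk ▸ mul_nonneg hν.le (hA j k)
  exact ⟨hJI, hJI_neg, fun δ hδ =>
    Matrix.re_lt_zero_of_mem_spectrum_of_offDiag_nonneg_of_mulVec_neg hJ_offDiag
      (fun j => (hIpos j).1) hJI_neg hδ⟩

/-- Local asymptotic stability of the endemic equilibrium via the Jacobian: with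
`J = νD − 𝔸 + B − ℓ·diag(I*)B − ℓ·diag(B I*)` one has `J I* = −ℓ·diag(B I*) I*`, whose
components are all strictly negative, and the stability modulus of `J` is negative
(every eigenvalue of `J` has negative real part). -/
theorem endemic_equilibrium_locally_asymptotically_stable
    (ℓ : ℕ) (hℓ : 1 ≤ ℓ)
    (lam gam : Fin ℓ → ℝ) (hlam : ∀ j, 0 < lam j) (hgam : ∀ j, 0 < gam j)
    (ν : ℝ) (hν : 0 < ν)
    (A : Matrix (Fin ℓ) (Fin ℓ) ℝ) (hA : ∀ j k, 0 ≤ A j k) (hAdiag : ∀ j, A j j = 0)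
    (hsym : A.IsSymm) (hirr : IrreducibleMat ℓ A)
    (D : Matrix (Fin ℓ) (Fin ℓ) ℝ)
    (hD : ∀ j k, D j k = if j = k then -∑ i ∈ univ.erase j, A j i else A j k)
    (Istar : Fin ℓ → ℝ) (hIpos : ∀ j, 0 < Istar j ∧ Istar j < (ℓ : ℝ)⁻¹)
    (hEq : (ν • D - Matrix.diagonal gam + Matrix.diagonal lam).mulVec Istar
      = (ℓ : ℝ) • (Matrix.diagonal Istar * Matrix.diagonal lam).mulVec Istar)
    (J : Matrix (Fin ℓ) (Fin ℓ) ℝ)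
    (hJ : J = ν • D - Matrix.diagonal gam + Matrix.diagonal lam
      - (ℓ : ℝ) • (Matrix.diagonal Istar * Matrix.diagonal lam)
      - (ℓ : ℝ) • Matrix.diagonal ((Matrix.diagonal lam).mulVec Istar)) :
    J.mulVec Istar
      = -((ℓ : ℝ) • (Matrix.diagonal ((Matrix.diagonal lam).mulVec Istar)).mulVec Istar) ∧
    (∀ j, (J.mulVec Istar) j < 0) ∧
    (∀ δ ∈ spectrum ℂ (J.map (Complex.ofReal ·)), δ.re < 0) :=
  endemic_equilibrium_locally_asymptotically_stable_general ℓ lam gam hlam ν hν A hA D hD Istar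
    hIpos hEq J hJ
end

section
/- Endemic equilibrium with identical patch parameters: assume A is symmetric and irreducible, ν_S = ν_I = ν > 0, and λ_j = λ, γ_j = γ for all j with λ > γ > 0. Then the point z* given by S*_j = γ/(ℓλ) and I*_j = (1/ℓ)(1 − γ/λ) for all j is an equilibrium of the system (★), and it is the unique equilibrium of (★) in Δ whose infectious components are not all zero. -/
open Finset Filter Topology

/-- Net migration into patch `j`: the coupling term of (★), `Σ_{k≠j} (a_{kj} x_k − a_{jk} x_j)`. -/
noncomputable def migration {ℓ : ℕ} (A : Matrix (Fin ℓ) (Fin ℓ) ℝ) (x : Fin ℓ → ℝ) (j : Fin ℓ) :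
    ℝ :=
  ∑ k ∈ univ.erase j, (A k j * x k - A j k * x j)

section Migration

variable {ℓ : ℕ} {A : Matrix (Fin ℓ) (Fin ℓ) ℝ}

lemma migration_add (x y : Fin ℓ → ℝ) (j : Fin ℓ) :
    migration A (x + y) j = migration A x j + migration A y j := by
  simp only [migration, ← sum_add_distrib, Pi.add_apply]
  exact sum_congr rfl fun _ _ => by ring

lemma migration_neg (x : Fin ℓ → ℝ) (j : Fin ℓ) : migration A (-x) j = -migration A x j := by
  simp only [migration, ← sum_neg_distrib, Pi.neg_apply]
  exact sum_congr rfl fun _ _ => by ring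

lemma migration_eq_of_isSymm (hsym : A.IsSymm) (x : Fin ℓ → ℝ) (j : Fin ℓ) :
    migration A x j = ∑ k ∈ univ.erase j, A j k * (x k - x j) := by
  refine sum_congr rfl fun k _ => ?_
  rw [← hsym.apply j k]
  ring

lemma migration_const (hsym : A.IsSymm) (c : ℝ) (j : Fin ℓ) : migration A (fun _ => c) j = 0 := by
  simp [migration_eq_of_isSymm hsym]

lemma migration_nonpos_of_forall_le (hA : ∀ j k, 0 ≤ A j k) (hsym : A.IsSymm)
    {x : Fin ℓ → ℝ} {j : Fin ℓ} (hmax : ∀ k, x k ≤ x j) : migration A x j ≤ 0 := by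
  rw [migration_eq_of_isSymm hsym]
  exact sum_nonpos fun k _ => mul_nonpos_of_nonneg_of_nonpos (hA j k) (by linarith [hmax k])

lemma migration_nonneg_of_forall_ge (hA : ∀ j k, 0 ≤ A j k) (hsym : A.IsSymm)
    {x : Fin ℓ → ℝ} {j : Fin ℓ} (hmin : ∀ k, x j ≤ x k) : 0 ≤ migration A x j := by
  have := migration_nonpos_of_forall_le hA hsym (x := -x) fun k => neg_le_neg (hmin k)
  rwa [migration_neg, neg_nonpos] at this

lemma eq_of_forall_le_of_migration_nonneg (hA : ∀ j k, 0 ≤ A j k) (hsym : A.IsSymm)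
    {x : Fin ℓ → ℝ} {j k : Fin ℓ} (hmax : ∀ k, x k ≤ x j) (hmig : 0 ≤ migration A x j)
    (hjk : A j k ≠ 0) : x k = x j := by
  obtain rfl | hkj := eq_or_ne k j
  · rfl
  have hterms : ∀ i ∈ univ.erase j, A j i * (x i - x j) ≤ 0 := fun i _ =>
    mul_nonpos_of_nonneg_of_nonpos (hA j i) (by linarith [hmax i])
  rw [migration_eq_of_isSymm hsym] at hmig
  have hzero := (sum_eq_zero_iff_of_nonpos hterms).1 (le_antisymm (sum_nonpos hterms) hmig) k
    (mem_erase.2 ⟨hkj, mem_univ k⟩)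
  linarith [(mul_eq_zero.1 hzero).resolve_left hjk]

end Migration

lemma IrreducibleMat.forall_of_invariant {ℓ : ℕ} {A : Matrix (Fin ℓ) (Fin ℓ) ℝ}
    (hirr : IrreducibleMat ℓ A) {P : Fin ℓ → Prop} (hP : ∀ j k, P j → A j k ≠ 0 → P k)
    {j : Fin ℓ} (hj : P j) (k : Fin ℓ) : P k := by
  obtain rfl | hjk := eq_or_ne j k
  · exact hj
  obtain ⟨s, -, c, rfl, rfl, hstep⟩ := hirr j k hjk
  have hpath : ∀ i ≤ s - 1, P (c i) := by
    intro i
    induction i with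
    | zero => exact fun _ => hj
    | succ i ih => exact fun hi => hP _ _ (ih (by omega)) (hstep i (by omega))
  exact hpath (s - 1) le_rfl

section MaximumPrinciple

variable {ℓ : ℕ} {A : Matrix (Fin ℓ) (Fin ℓ) ℝ}
  (hA : ∀ j k, 0 ≤ A j k) (hsym : A.IsSymm) (hirr : IrreducibleMat ℓ A)
include hA hsym hirr

theorem eq_of_isMax_of_migration_nonneg {x : Fin ℓ → ℝ} {j₀ : Fin ℓ} (hmax : ∀ k, x k ≤ x j₀)
    (hmig : ∀ j, x j = x j₀ → 0 ≤ migration A x j) (k : Fin ℓ) : x k = x j₀ :=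
  hirr.forall_of_invariant (P := fun j => x j = x j₀)
    (fun j _ hj hjk => (eq_of_forall_le_of_migration_nonneg hA hsym (fun i => hj ▸ hmax i)
      (hmig j hj) hjk).trans hj) rfl k

theorem eq_of_isMin_of_migration_nonpos {x : Fin ℓ → ℝ} {j₀ : Fin ℓ} (hmin : ∀ k, x j₀ ≤ x k)
    (hmig : ∀ j, x j = x j₀ → migration A x j ≤ 0) (k : Fin ℓ) : x k = x j₀ :=
  neg_inj.1 <| eq_of_isMax_of_migration_nonneg hA hsym hirr (x := -x)
    (fun i => neg_le_neg (hmin i))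
    (fun j hj => by rw [migration_neg]; exact neg_nonneg.2 (hmig j (neg_inj.1 hj))) k

theorem eq_of_migration_eq_zero {x : Fin ℓ → ℝ} (hmig : ∀ j, migration A x j = 0)
    (j k : Fin ℓ) : x j = x k := by
  have : Nonempty (Fin ℓ) := ⟨j⟩
  obtain ⟨j₀, hmax⟩ := Finite.exists_max x
  have hconst := eq_of_isMax_of_migration_nonneg hA hsym hirr hmax fun j _ => (hmig j).ge
  rw [hconst j, hconst k]

end MaximumPrinciple

section Drift

variable {ℓ : ℕ} {A : Matrix (Fin ℓ) (Fin ℓ) ℝ} {ν : ℝ}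

lemma driftS_add_driftI (lam gam : Fin ℓ → ℝ) (S I : Fin ℓ → ℝ) (j : Fin ℓ) :
    driftS ℓ lam gam ν A S I j + driftI ℓ lam gam ν A S I j = ν * migration A (S + I) j := by
  rw [migration_add]
  simp only [driftS, driftI, migration]
  ring

lemma driftS_const (hsym : A.IsSymm) (lam gam : Fin ℓ → ℝ) (s i : ℝ) (j : Fin ℓ) :
    driftS ℓ lam gam ν A (fun _ => s) (fun _ => i) j
      = -(lam j * (s * i / (s + i)) - gam j * i) := by
  have := migration_const (A := A) hsym s j
  simp only [driftS, migration] at this ⊢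
  rw [this]
  ring

lemma driftI_const (hsym : A.IsSymm) (lam gam : Fin ℓ → ℝ) (s i : ℝ) (j : Fin ℓ) :
    driftI ℓ lam gam ν A (fun _ => s) (fun _ => i) j = lam j * (s * i / (s + i)) - gam j * i := by
  have := migration_const (A := A) hsym i j
  simp only [driftI, migration] at this ⊢
  rw [this]
  ring

lemma driftI_eq_logistic_of_add_eq {lam gam m : ℝ} (hlam : lam ≠ 0) (hm : m ≠ 0)
    {S I : Fin ℓ → ℝ} {j : Fin ℓ} (hN : S j + I j = m) :
    driftI ℓ (fun _ => lam) (fun _ => gam) ν A S I j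
      = lam / m * I j * (m * (1 - gam / lam) - I j) + ν * migration A I j := by
  have hS : S j = m - I j := by linarith
  simp only [driftI, migration]
  rw [hN, hS]
  field_simp
  ring

end Drift

section Equilibria

variable {ℓ : ℕ} {A : Matrix (Fin ℓ) (Fin ℓ) ℝ} {ν : ℝ}
  (hA : ∀ j k, 0 ≤ A j k) (hsym : A.IsSymm) (hirr : IrreducibleMat ℓ A)
include hA hsym hirr

theorem add_eq_inv_of_drift_eq_zero (hν : ν ≠ 0) {lam gam : Fin ℓ → ℝ} {S I : Fin ℓ → ℝ}
    (hsum : ∑ j, (S j + I j) = 1) (hdS : ∀ j, driftS ℓ lam gam ν A S I j = 0)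
    (hdI : ∀ j, driftI ℓ lam gam ν A S I j = 0) (j : Fin ℓ) : S j + I j = (ℓ : ℝ)⁻¹ := by
  have hmig (k : Fin ℓ) : migration A (S + I) k = 0 := by
    have := driftS_add_driftI (ν := ν) (A := A) lam gam S I k
    rw [hdS, hdI, add_zero, eq_comm, mul_eq_zero] at this
    exact this.resolve_left hν
  have hconst (k : Fin ℓ) : S k + I k = S j + I j := eq_of_migration_eq_zero hA hsym hirr hmig k j
  rw [sum_congr rfl fun k _ => hconst k, sum_const, card_univ, Fintype.card_fin, nsmul_eq_mul]
    at hsum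
  exact eq_inv_of_mul_eq_one_right hsum

theorem pos_of_driftI_eq_zero (hν : ν ≠ 0) {lam gam : Fin ℓ → ℝ} {S I : Fin ℓ → ℝ}
    (hI : ∀ j, 0 ≤ I j) (hdI : ∀ j, driftI ℓ lam gam ν A S I j = 0) (hI0 : I ≠ 0) (j : Fin ℓ) :
    0 < I j := by
  refine (hI j).lt_of_ne fun hj => hI0 (funext fun k => ?_)
  refine (eq_of_isMin_of_migration_nonpos hA hsym hirr (j₀ := j) (fun k => hj ▸ hI k)
    (fun i hi => ?_) k).trans hj.symm
  have hIi : I i = 0 := hi.trans hj.symm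
  have := hdI i
  simp only [driftI, hIi, mul_zero, zero_div, sub_zero, zero_add] at this
  simp only [migration, hIi, mul_zero, sub_zero, (mul_eq_zero.1 this).resolve_left hν, le_refl]

end Equilibria

theorem eq_of_driftI_eq_zero_of_add_eq {ℓ : ℕ} {A : Matrix (Fin ℓ) (Fin ℓ) ℝ} {ν : ℝ}
    (hA : ∀ j k, 0 ≤ A j k) (hsym : A.IsSymm) (hν : 0 ≤ ν) {lam gam m : ℝ} (hlam : 0 < lam)
    (hm : 0 < m) {S I : Fin ℓ → ℝ} (hN : ∀ j, S j + I j = m) (hIpos : ∀ j, 0 < I j)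
    (hdI : ∀ j, driftI ℓ (fun _ => lam) (fun _ => gam) ν A S I j = 0) (j : Fin ℓ) :
    I j = m * (1 - gam / lam) := by
  set c := m * (1 - gam / lam)
  have hlog (k : Fin ℓ) : lam / m * I k * (c - I k) = -(ν * migration A I k) := by
    have := hdI k
    rw [driftI_eq_logistic_of_add_eq hlam.ne' hm.ne' (hN k)] at this
    linarith
  have hcoef (k : Fin ℓ) : 0 < lam / m * I k := mul_pos (div_pos hlam hm) (hIpos k)
  have : Nonempty (Fin ℓ) := ⟨j⟩
  obtain ⟨jM, hmax⟩ := Finite.exists_max I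
  obtain ⟨jm, hmin⟩ := Finite.exists_min I
  have hupper : I jM ≤ c := by
    have hmig := mul_nonpos_of_nonneg_of_nonpos hν (migration_nonpos_of_forall_le hA hsym hmax)
    have := nonneg_of_mul_nonneg_right (by rw [hlog jM]; exact neg_nonneg.2 hmig) (hcoef jM)
    linarith
  have hlower : c ≤ I jm := by
    have hmig := mul_nonneg hν (migration_nonneg_of_forall_ge hA hsym hmin)
    have := nonpos_of_mul_nonpos_right (by rw [hlog jm]; exact neg_nonpos.2 hmig) (hcoef jm)
    linarith
  linarith [hmax j, hmin j]

theorem endemic_equilibrium_identical_patches_general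
    (ℓ : ℕ)
    (lam gam : ℝ) (hgam : 0 < gam) (hlam : gam < lam)
    (ν : ℝ) (hν : 0 < ν)
    (A : Matrix (Fin ℓ) (Fin ℓ) ℝ) (hA : ∀ j k, 0 ≤ A j k)
    (hsym : A.IsSymm) (hirr : IrreducibleMat ℓ A) :
    ((∀ j, driftS ℓ (fun _ => lam) (fun _ => gam) ν A
        (fun _ => gam / ((ℓ : ℝ) * lam)) (fun _ => (ℓ : ℝ)⁻¹ * (1 - gam / lam)) j = 0) ∧
     (∀ j, driftI ℓ (fun _ => lam) (fun _ => gam) ν A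
        (fun _ => gam / ((ℓ : ℝ) * lam)) (fun _ => (ℓ : ℝ)⁻¹ * (1 - gam / lam)) j = 0)) ∧
    (∀ S I : Fin ℓ → ℝ,
      (∀ j, 0 ≤ S j) → (∀ j, 0 ≤ I j) → (∑ j, (S j + I j)) = 1 →
      (∀ j, driftS ℓ (fun _ => lam) (fun _ => gam) ν A S I j = 0) →
      (∀ j, driftI ℓ (fun _ => lam) (fun _ => gam) ν A S I j = 0) →
      I ≠ 0 →
      S = (fun _ => gam / ((ℓ : ℝ) * lam)) ∧
      I = (fun _ => (ℓ : ℝ)⁻¹ * (1 - gam / lam))) := by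
  have hlam₀ : 0 < lam := hgam.trans hlam
  set s : ℝ := gam / ((ℓ : ℝ) * lam)
  set i : ℝ := (ℓ : ℝ)⁻¹ * (1 - gam / lam)
  have hmass (j : Fin ℓ) : s + i = (ℓ : ℝ)⁻¹ := by
    have : (ℓ : ℝ) ≠ 0 := Nat.cast_ne_zero.2 j.pos.ne'
    simp only [s, i]
    field_simp [hlam₀.ne']
    ring
  have hreaction (j : Fin ℓ) : lam * (s * i / (s + i)) - gam * i = 0 := by
    have : (ℓ : ℝ) ≠ 0 := Nat.cast_ne_zero.2 j.pos.ne'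
    rw [hmass j, div_inv_eq_mul]
    simp only [s]
    field_simp [hlam₀.ne']
    ring
  refine ⟨⟨fun j => ?_, fun j => ?_⟩, fun S I _ hI hsum hdS hdI hI0 => ?_⟩
  · rw [driftS_const hsym, hreaction j, neg_zero]
  · rw [driftI_const hsym, hreaction j]
  have hN := add_eq_inv_of_drift_eq_zero hA hsym hirr hν.ne' hsum hdS hdI
  have hIpos := pos_of_driftI_eq_zero hA hsym hirr hν.ne' hI hdI hI0
  have hIeq (j : Fin ℓ) : I j = i := eq_of_driftI_eq_zero_of_add_eq hA hsym hν.le hlam₀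
    (inv_pos.2 (Nat.cast_pos.2 j.pos)) hN hIpos hdI j
  refine ⟨funext fun j => ?_, funext hIeq⟩
  rw [eq_sub_of_add_eq (hN j), hIeq j, ← hmass j, add_sub_cancel_right]

/-- Endemic equilibrium with identical patch parameters: if `A` is symmetric and
irreducible, `ν_S = ν_I = ν > 0` and all patches share the parameters `λ > γ > 0`, then
`S*_j = γ/(ℓλ)`, `I*_j = (1/ℓ)(1 − γ/λ)` is an equilibrium of (★), and it is the unique
equilibrium of (★) in `Δ` whose infectious components are not all zero. -/
theorem endemic_equilibrium_identical_patches
    (ℓ : ℕ) (hℓ : 1 ≤ ℓ)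
    (lam gam : ℝ) (hgam : 0 < gam) (hlam : gam < lam)
    (ν : ℝ) (hν : 0 < ν)
    (A : Matrix (Fin ℓ) (Fin ℓ) ℝ) (hA : ∀ j k, 0 ≤ A j k) (hAdiag : ∀ j, A j j = 0)
    (hsym : A.IsSymm) (hirr : IrreducibleMat ℓ A) :
    ((∀ j, driftS ℓ (fun _ => lam) (fun _ => gam) ν A
        (fun _ => gam / ((ℓ : ℝ) * lam)) (fun _ => (ℓ : ℝ)⁻¹ * (1 - gam / lam)) j = 0) ∧
     (∀ j, driftI ℓ (fun _ => lam) (fun _ => gam) ν A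
        (fun _ => gam / ((ℓ : ℝ) * lam)) (fun _ => (ℓ : ℝ)⁻¹ * (1 - gam / lam)) j = 0)) ∧
    (∀ S I : Fin ℓ → ℝ,
      (∀ j, 0 ≤ S j) → (∀ j, 0 ≤ I j) → (∑ j, (S j + I j)) = 1 →
      (∀ j, driftS ℓ (fun _ => lam) (fun _ => gam) ν A S I j = 0) →
      (∀ j, driftI ℓ (fun _ => lam) (fun _ => gam) ν A S I j = 0) →
      I ≠ 0 →
      S = (fun _ => gam / ((ℓ : ℝ) * lam)) ∧
      I = (fun _ => (ℓ : ℝ)⁻¹ * (1 - gam / lam))) :=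
  endemic_equilibrium_identical_patches_general ℓ lam gam hgam hlam ν hν A hA hsym hirr
end
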